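/- Let m ≥ 1, w ∈ (0,∞), and let C̄ ∈ ℝ^{m×m} be a nonzero lower triangular matrix with nonnegative diagonal entries and singular values σ̄₁ ≥ ⋯ ≥ σ̄_m. Let C̃ be the unique lower triangular matrix with positive diagonal entries satisfying C̃ᵀ·C̃ = C̄ᵀ·C̄ + w²·I_m, and set C = C̄·C̃⁻¹. With α_a², β_a² defined by α_a² = c̄_aa²/(c̄_aa² + w² + ν̄_a²) and β_a² = c̄_aa²/(c̄_aa² + w² + ν̲_a²), where ν̲_a² = w²·‖d̄_a‖²/(σ_max(C̄_a)² + w²), ν̄_a² = w²·‖d̄_a‖²/(σ_min(C̄_a)² + w²), d̄_a = (c̄_{a+1,a},…,c̄_{m,a}), and C̄_a is the trailing submatrix of C̄ with rows and columns a+1,…,m, one has (1/ρ²)·∑_{a=1}^{m} α_a² ≤ dn(C) ≤ (1/ρ²)·∑_{a=1}^{m} β_a², where ρ² = ∑_{a=1}^{m} σ̄_a²/(σ̄_a² + w²). -/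

import Mathlib

open Matrix

/-- The singular values of a real matrix `A`: the square roots of the eigenvalues of
`Aᵀ·A` (indexed by the column type). -/
noncomputable def singVals {ι κ : Type*} [Fintype ι] [Fintype κ] [DecidableEq κ]
    (A : Matrix ι κ ℝ) : κ → ℝ :=
  fun j => Real.sqrt (((show (Aᵀ * A).IsHermitian by
    rw [← Matrix.conjTranspose_eq_transpose_of_trivial]
    exact Matrix.isHermitian_conjTranspose_mul_self A)).eigenvalues j)

/-- The largest singular value (spectral norm). -/
noncomputable def sigmaMax {ι κ : Type*} [Fintype ι] [Fintype κ] [DecidableEq κ]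
    (A : Matrix ι κ ℝ) : ℝ := ⨆ j, singVals A j

/-- The smallest singular value. -/
noncomputable def sigmaMin {ι κ : Type*} [Fintype ι] [Fintype κ] [DecidableEq κ]
    (A : Matrix ι κ ℝ) : ℝ := ⨅ j, singVals A j

/-- The trailing principal submatrix `C̄_a` of `C` with rows and columns `a+1,…,m`. -/
def trailing {m : ℕ} (C : Matrix (Fin m) (Fin m) ℝ) (a : Fin m) :
    Matrix {i : Fin m // a < i} {i : Fin m // a < i} ℝ :=
  fun i j => C i.1 j.1

theorem Matrix.isHermitian_transpose_mul_self {ι κ : Type*} [Fintype ι] [Fintype κ]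
    (A : Matrix ι κ ℝ) : (Aᵀ * A).IsHermitian := by
  rw [← Matrix.conjTranspose_eq_transpose_of_trivial]
  exact Matrix.isHermitian_conjTranspose_mul_self A

/-- `‖d̄_a‖²`: the squared Euclidean norm of the part of column `a` of `C`
strictly below the diagonal, i.e. of `(c_{a+1,a},…,c_{m,a})`. -/
def tailSq {m : ℕ} (C : Matrix (Fin m) (Fin m) ℝ) (a : Fin m) : ℝ :=
  ∑ i : Fin m, if a < i then (C i a) ^ 2 else 0

/-- The diagonalization number `dn(M) = (∑_i m_ii²)/‖M‖_F²` of a square matrix. -/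
noncomputable def dn {m : ℕ} (M : Matrix (Fin m) (Fin m) ℝ) : ℝ :=
  (∑ i, (M i i) ^ 2) / (∑ i, ∑ j, (M i j) ^ 2)


-- ### Auxiliary lemmas ###

section FinHelpers
variable {m : ℕ}

lemma sum_tail_ite (a : Fin m) (f : Fin m → ℝ) :
    ∑ k, (if a < k then f k else 0) = ∑ k : {i : Fin m // a < i}, f k.1 := by
  classical
  rw [← Finset.sum_filter]
  exact Finset.sum_subtype _ (fun x => by simp) f

lemma sum_tail (a : Fin m) (f : Fin m → ℝ) (h0 : ∀ k, ¬ a < k → f k = 0) :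
    ∑ k, f k = ∑ k : {i : Fin m // a < i}, f k.1 := by
  rw [← sum_tail_ite]
  refine Finset.sum_congr rfl fun k _ => ?_
  by_cases h : a < k <;> simp [h, h0 k]

lemma sum_split_diag_tail (a : Fin m) (f : Fin m → ℝ) (h0 : ∀ k, k < a → f k = 0) :
    ∑ k, f k = f a + ∑ k : {i : Fin m // a < i}, f k.1 := by
  have key : ∀ k, f k = (if k = a then f k else 0) + (if a < k then f k else 0) := by
    intro k
    rcases lt_trichotomy k a with h | h | h
    · simp [h0 k h, h.ne, not_lt.mpr h.le]
    · simp [h, lt_irrefl]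
    · simp [h, h.ne']
  rw [Finset.sum_congr rfl (fun k _ => key k), Finset.sum_add_distrib, sum_tail_ite]
  congr 1
  simp
end FinHelpers

section Key
variable {n : Type*} [Fintype n] [DecidableEq n]


-- w²-regularized matrix is positive definite
lemma posDef_reg (S : Matrix n n ℝ) (hS : S.PosSemidef) (w : ℝ) (hw : 0 < w) :
    (S + w ^ 2 • (1 : Matrix n n ℝ)).PosDef := by
  refine Matrix.PosDef.posSemidef_add hS ?_
  rw [Matrix.smul_one_eq_diagonal]
  exact Matrix.posDef_diagonal_iff.mpr (fun _ => by positivity)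

-- spectral form of the inverse of the regularized matrix
lemma reg_inv_spec (S : Matrix n n ℝ) (hS : S.PosSemidef) (w : ℝ) (hw : 0 < w) :
    (S + w ^ 2 • (1 : Matrix n n ℝ))⁻¹
      = (hS.1.eigenvectorUnitary : Matrix n n ℝ)
        * diagonal (fun j => (hS.1.eigenvalues j + w ^ 2)⁻¹)
        * star (hS.1.eigenvectorUnitary : Matrix n n ℝ) := by
  set U := (hS.1.eigenvectorUnitary : Matrix n n ℝ) with hU
  have hUU : U * star U = 1 := (Matrix.mem_unitaryGroup_iff).mp hS.1.eigenvectorUnitary.2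
  have hUU' : star U * U = 1 := (Matrix.mem_unitaryGroup_iff').mp hS.1.eigenvectorUnitary.2
  have hspec : S = U * diagonal hS.1.eigenvalues * star U := by
    convert hS.1.spectral_theorem using 3
    rfl
  have hpos : ∀ j, 0 < hS.1.eigenvalues j + w ^ 2 :=
    fun j => by have := hS.eigenvalues_nonneg j; positivity
  have hsum : S + w ^ 2 • (1 : Matrix n n ℝ)
      = U * diagonal (fun j => hS.1.eigenvalues j + w ^ 2) * star U := by
    have h1 : (w ^ 2 : ℝ) • (1 : Matrix n n ℝ) = U * (w ^ 2 • 1) * star U := by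
      rw [Matrix.mul_smul, mul_one, Matrix.smul_mul, hUU]
    calc S + w ^ 2 • (1 : Matrix n n ℝ)
        = U * diagonal hS.1.eigenvalues * star U + U * (w ^ 2 • 1) * star U := by
          rw [← hspec, ← h1]
      _ = U * (diagonal hS.1.eigenvalues + w ^ 2 • 1) * star U := by
          rw [← Matrix.add_mul, ← Matrix.mul_add]
      _ = U * diagonal (fun j => hS.1.eigenvalues j + w ^ 2) * star U := by
          congr 2
          rw [Matrix.smul_one_eq_diagonal, Matrix.diagonal_add]
  refine Matrix.inv_eq_right_inv ?_
  rw [hsum]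
  calc U * diagonal (fun j => hS.1.eigenvalues j + w ^ 2) * star U *
        (U * diagonal (fun j => (hS.1.eigenvalues j + w ^ 2)⁻¹) * star U)
      = U * (diagonal (fun j => hS.1.eigenvalues j + w ^ 2) * ((star U * U) *
          diagonal (fun j => (hS.1.eigenvalues j + w ^ 2)⁻¹))) * star U := by
        simp only [Matrix.mul_assoc]
    _ = 1 := by
        rw [hUU', one_mul, Matrix.diagonal_mul_diagonal]
        have : (fun j => (hS.1.eigenvalues j + w ^ 2) * (hS.1.eigenvalues j + w ^ 2)⁻¹)
            = fun _ => (1:ℝ) := by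
          funext j; exact mul_inv_cancel₀ (hpos j).ne'
        rw [this, Matrix.diagonal_one, mul_one, hUU]

-- y = star U *ᵥ x preserves norms etc.
lemma quadform_reg_inv (S : Matrix n n ℝ) (hS : S.PosSemidef) (w : ℝ) (hw : 0 < w)
    (x : n → ℝ) (lo hi : ℝ) (hlo0 : 0 ≤ lo)
    (hlo : ∀ j, lo ≤ hS.1.eigenvalues j) (hhi : ∀ j, hS.1.eigenvalues j ≤ hi) :
    (∑ i, x i ^ 2) / (hi + w ^ 2) ≤ x ⬝ᵥ ((S + w ^ 2 • 1)⁻¹ *ᵥ x)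
    ∧ x ⬝ᵥ ((S + w ^ 2 • 1)⁻¹ *ᵥ x) ≤ (∑ i, x i ^ 2) / (lo + w ^ 2) := by
  classical
  set U := (hS.1.eigenvectorUnitary : Matrix n n ℝ) with hU
  have hUU : U * star U = 1 := (Matrix.mem_unitaryGroup_iff).mp hS.1.eigenvectorUnitary.2
  set eig := hS.1.eigenvalues with heig
  set y : n → ℝ := star U *ᵥ x with hy
  have hxU : x ᵥ* U = y := by
    funext j
    simp only [hy, Matrix.vecMul, Matrix.mulVec, dotProduct, Matrix.star_apply]
    exact Finset.sum_congr rfl fun i _ => by simp [mul_comm]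
  have hyy : ∑ j, y j ^ 2 = ∑ i, x i ^ 2 := by
    have h1 : ∑ j, y j ^ 2 = y ⬝ᵥ y := by
      simp [dotProduct, pow_two]
    have h2 : y ⬝ᵥ y = x ⬝ᵥ x := by
      rw [hy, Matrix.dotProduct_mulVec, ← hy, ← hxU, Matrix.vecMul_vecMul, hUU,
        Matrix.vecMul_one]
    rw [h1, h2]
    simp [dotProduct, pow_two]
  have hq : x ⬝ᵥ ((S + w ^ 2 • 1)⁻¹ *ᵥ x) = ∑ j, y j ^ 2 / (eig j + w ^ 2) := by
    rw [reg_inv_spec S hS w hw, ← Matrix.mulVec_mulVec, ← Matrix.mulVec_mulVec,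
      Matrix.dotProduct_mulVec, hxU]
    change y ⬝ᵥ (diagonal fun j => (eig j + w ^ 2)⁻¹) *ᵥ y = _
    simp only [dotProduct, Matrix.mulVec_diagonal]
    exact Finset.sum_congr rfl fun j _ => by rw [div_eq_mul_inv]; ring
  have hpos : ∀ j, 0 < eig j + w ^ 2 := fun j => by
    have := hS.eigenvalues_nonneg j; positivity
  constructor
  · rw [hq, ← hyy, Finset.sum_div]
    exact Finset.sum_le_sum fun j _ =>
      div_le_div_of_nonneg_left (by positivity) (hpos j) (add_le_add_left (hhi j) _)
  · rw [hq, ← hyy, Finset.sum_div]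
    exact Finset.sum_le_sum fun j _ =>
      div_le_div_of_nonneg_left (by positivity) (by positivity) (add_le_add_left (hlo j) _)

lemma trace_conj (U X : Matrix n n ℝ) (hUU' : star U * U = 1) :
    (U * X * star U).trace = X.trace := by
  rw [Matrix.trace_mul_comm, ← Matrix.mul_assoc, hUU', one_mul]

lemma trace_eig (S : Matrix n n ℝ) (hS : S.IsHermitian) :
    S.trace = ∑ j, hS.eigenvalues j := by
  set U := (hS.eigenvectorUnitary : Matrix n n ℝ) with hU
  have hUU' : star U * U = 1 := (Matrix.mem_unitaryGroup_iff').mp hS.eigenvectorUnitary.2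
  have hspec : S = U * diagonal hS.eigenvalues * star U := by
    convert hS.spectral_theorem using 3
    rfl
  calc S.trace = (U * diagonal hS.eigenvalues * star U).trace := by rw [← hspec]
    _ = (diagonal hS.eigenvalues).trace := trace_conj _ _ hUU'
    _ = ∑ j, hS.eigenvalues j := Matrix.trace_diagonal _

lemma trace_reg_inv (S : Matrix n n ℝ) (hS : S.PosSemidef) (w : ℝ) (hw : 0 < w) :
    (S * (S + w ^ 2 • 1)⁻¹).trace = ∑ j, hS.1.eigenvalues j / (hS.1.eigenvalues j + w ^ 2) := by
  set U := (hS.1.eigenvectorUnitary : Matrix n n ℝ) with hU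
  have hUU' : star U * U = 1 := (Matrix.mem_unitaryGroup_iff').mp hS.1.eigenvectorUnitary.2
  have hspec : S = U * diagonal hS.1.eigenvalues * star U := by
    convert hS.1.spectral_theorem using 3
    rfl
  rw [reg_inv_spec S hS w hw]
  calc (S * (U * diagonal (fun j => (hS.1.eigenvalues j + w ^ 2)⁻¹) * star U)).trace
      = (U * diagonal hS.1.eigenvalues * star U *
          (U * diagonal (fun j => (hS.1.eigenvalues j + w ^ 2)⁻¹) * star U)).trace := by
        rw [← hspec]
    _ = (U * (diagonal hS.1.eigenvalues * ((star U * U) *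
          diagonal (fun j => (hS.1.eigenvalues j + w ^ 2)⁻¹))) * star U).trace := by
        simp only [Matrix.mul_assoc]
    _ = (diagonal hS.1.eigenvalues * ((star U * U) *
          diagonal (fun j => (hS.1.eigenvalues j + w ^ 2)⁻¹))).trace := trace_conj _ _ hUU'
    _ = ∑ j, hS.1.eigenvalues j / (hS.1.eigenvalues j + w ^ 2) := by
        rw [hUU', one_mul, Matrix.diagonal_mul_diagonal, Matrix.trace_diagonal]
        exact Finset.sum_congr rfl fun j _ => (div_eq_mul_inv _ _).symm

-- if`T *ᵥ x = μ • x` with `x ≠ 0`, then μ is one of the eigenvalues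
lemma exists_eigenvalue_of_mulVec (T : Matrix n n ℝ) (hT : T.IsHermitian) (μ : ℝ)
    (x : n → ℝ) (hx : x ≠ 0) (hTx : T *ᵥ x = μ • x) :
    ∃ k, hT.eigenvalues k = μ := by
  by_contra hcon
  push_neg at hcon
  set U := (hT.eigenvectorUnitary : Matrix n n ℝ) with hU
  have hUU : U * star U = 1 := (Matrix.mem_unitaryGroup_iff).mp hT.eigenvectorUnitary.2
  have hUU' : star U * U = 1 := (Matrix.mem_unitaryGroup_iff').mp hT.eigenvectorUnitary.2
  have hspec : T = U * diagonal hT.eigenvalues * star U := by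
    convert hT.spectral_theorem using 3
    rfl
  have hsub : T - μ • 1 = U * diagonal (fun k => hT.eigenvalues k - μ) * star U := by
    have h1 : (μ : ℝ) • (1 : Matrix n n ℝ) = U * (μ • 1) * star U := by
      rw [Matrix.mul_smul, mul_one, Matrix.smul_mul, hUU]
    calc T - μ • (1 : Matrix n n ℝ)
        = U * diagonal hT.eigenvalues * star U - U * (μ • 1) * star U := by rw [← hspec, ← h1]
      _ = U * (diagonal hT.eigenvalues - μ • 1) * star U := by
          rw [← Matrix.sub_mul, ← Matrix.mul_sub]
      _ = U * diagonal (fun k => hT.eigenvalues k - μ) * star U := by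
          congr 2
          rw [Matrix.smul_one_eq_diagonal, Matrix.diagonal_sub]
  have hdet : (T - μ • 1).det ≠ 0 := by
    rw [hsub, Matrix.det_mul, Matrix.det_mul]
    have h2 : U.det * (star U).det = 1 := by rw [← Matrix.det_mul, hUU, Matrix.det_one]
    have h3 : (diagonal (fun k => hT.eigenvalues k - μ)).det ≠ 0 := by
      rw [Matrix.det_diagonal]
      exact Finset.prod_ne_zero_iff.mpr fun k _ => sub_ne_zero.mpr (hcon k)
    intro h
    rw [mul_comm (U.det), mul_assoc, h2, mul_one] at h
    exact h3 h
  have hker : (T - μ • 1) *ᵥ x = 0 := by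
    rw [Matrix.sub_mulVec, hTx, Matrix.smul_mulVec, Matrix.one_mulVec, sub_self]
  exact hx (Matrix.eq_zero_of_mulVec_eq_zero hdet hker)

-- every eigenvalue of A * Aᵀ is an eigenvalue of Aᵀ * A
lemma eigenvalue_transfer (A : Matrix n n ℝ) (j : n) :
    ∃ k, (Matrix.isHermitian_transpose_mul_self A).eigenvalues k
        = (Matrix.isHermitian_mul_conjTranspose_self A).eigenvalues j := by
  classical
  set hS := Matrix.isHermitian_mul_conjTranspose_self A
  set hT := Matrix.isHermitian_transpose_mul_self A
  set μ := hS.eigenvalues j with hμ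
  by_cases h0 : μ = 0
  · -- det (AᴴA) = det (AAᴴ) = 0
    have hdetS : (A * Aᴴ).det = 0 := by
      rw [hS.det_eq_prod_eigenvalues]
      exact Finset.prod_eq_zero (Finset.mem_univ j) (by rw [← hμ, h0]; norm_num)
    have hdetT : (Aᴴ * A).det = 0 := by
      rw [Matrix.det_mul] at hdetS ⊢
      rw [mul_comm]; exact hdetS
    rw [Matrix.conjTranspose_eq_transpose_of_trivial] at hdetT
    rw [hT.det_eq_prod_eigenvalues] at hdetT
    have := Finset.prod_eq_zero_iff.mp hdetT
    obtain ⟨k, _, hk⟩ := this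
    refine ⟨k, ?_⟩
    have : hT.eigenvalues k = 0 := by exact_mod_cast hk
    rw [this, hμ] at *
    exact h0.symm
  · have hv := hS.mulVec_eigenvectorBasis j
    have hvne : (⇑(hS.eigenvectorBasis j) : n → ℝ) ≠ 0 :=
      fun h => hS.eigenvectorBasis.orthonormal.ne_zero j (by simpa using h)
    set v : n → ℝ := ⇑(hS.eigenvectorBasis j)
    set x : n → ℝ := Aᴴ *ᵥ v with hx
    have hTx : (Aᴴ * A) *ᵥ x = μ • x := by
      have h5 : A *ᵥ (Aᴴ *ᵥ v) = μ • v := by rw [Matrix.mulVec_mulVec]; exact hv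
      rw [hx, ← Matrix.mulVec_mulVec, h5, Matrix.mulVec_smul]
    have hxne : x ≠ 0 := by
      intro hx0
      have : (A * Aᴴ) *ᵥ v = 0 := by
        rw [← Matrix.mulVec_mulVec, ← hx, hx0, Matrix.mulVec_zero]
      rw [hv] at this
      exact hvne ((smul_eq_zero.mp this).resolve_left h0)
    exact exists_eigenvalue_of_mulVec _ hT μ x hxne hTx

lemma dot_self_mulVec (M : Matrix n n ℝ) (x : n → ℝ) :
    (M *ᵥ x) ⬝ᵥ (M *ᵥ x) = x ⬝ᵥ ((Mᵀ * M) *ᵥ x) := by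
  calc (M *ᵥ x) ⬝ᵥ (M *ᵥ x) = (x ᵥ* Mᵀ) ⬝ᵥ (M *ᵥ x) := by rw [Matrix.vecMul_transpose]
    _ = x ⬝ᵥ (Mᵀ *ᵥ (M *ᵥ x)) := (Matrix.dotProduct_mulVec x Mᵀ (M *ᵥ x)).symm
    _ = x ⬝ᵥ ((Mᵀ * M) *ᵥ x) := by rw [Matrix.mulVec_mulVec]

-- push-through identity
lemma push_through (A : Matrix n n ℝ) (w : ℝ) (hw : 0 < w) :
    A * (Aᵀ * A + w ^ 2 • 1)⁻¹ * Aᵀ = 1 - w ^ 2 • (A * Aᵀ + w ^ 2 • 1)⁻¹ := by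
  have hP : (Aᵀ * A + w ^ 2 • (1 : Matrix n n ℝ)).PosDef :=
    posDef_reg _ (Matrix.posSemidef_conjTranspose_mul_self A) w hw
  have hQ : (A * Aᵀ + w ^ 2 • (1 : Matrix n n ℝ)).PosDef :=
    posDef_reg _ (Matrix.posSemidef_self_mul_conjTranspose A) w hw
  set P := Aᵀ * A + w ^ 2 • (1 : Matrix n n ℝ)
  set Q := A * Aᵀ + w ^ 2 • (1 : Matrix n n ℝ)
  have hPdet : IsUnit P.det := hP.det_pos.ne'.isUnit
  have hQdet : IsUnit Q.det := hQ.det_pos.ne'.isUnit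
  have hQA : Q * A = A * P := by
    show (A * Aᵀ + w ^ 2 • 1) * A = A * (Aᵀ * A + w ^ 2 • 1)
    rw [Matrix.add_mul, Matrix.mul_add, Matrix.smul_mul, Matrix.mul_smul, one_mul, mul_one,
      Matrix.mul_assoc]
  have hAP : A * P⁻¹ = Q⁻¹ * A := by
    calc A * P⁻¹ = Q⁻¹ * (Q * A) * P⁻¹ := by
          rw [← Matrix.mul_assoc, Matrix.nonsing_inv_mul Q hQdet, one_mul]
      _ = Q⁻¹ * A * (P * P⁻¹) := by rw [hQA]; simp only [Matrix.mul_assoc]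
      _ = Q⁻¹ * A := by rw [Matrix.mul_nonsing_inv P hPdet, Matrix.mul_one]
  rw [hAP, Matrix.mul_assoc]
  have hAAt : A * Aᵀ = Q - w ^ 2 • 1 := by simp [Q]
  rw [hAAt, Matrix.mul_sub, Matrix.nonsing_inv_mul Q hQdet, Matrix.mul_smul, mul_one]

end Key

set_option maxHeartbeats 1000000 in
lemma diag_formula (m : ℕ) (w : ℝ) (hw : 0 < w) (Cb Ct : Matrix (Fin m) (Fin m) ℝ)
    (hCbLT : ∀ i j : Fin m, i < j → Cb i j = 0)
    (hCtLT : ∀ i j : Fin m, i < j → Ct i j = 0)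
    (hCt : Ctᵀ * Ct = Cbᵀ * Cb + (w ^ 2) • (1 : Matrix (Fin m) (Fin m) ℝ)) (a : Fin m) :
    Ct a a ^ 2 = Cb a a ^ 2 + w ^ 2
      + w ^ 2 * ((fun i : {i : Fin m // a < i} => Cb i.1 a) ⬝ᵥ
          (((trailing Cb a) * (trailing Cb a)ᵀ + w ^ 2 • 1)⁻¹ *ᵥ
            (fun i : {i : Fin m // a < i} => Cb i.1 a))) := by
  classical
  set τ := {i : Fin m // a < i}
  set A := trailing Cb a with hA
  set L := trailing Ct a with hL
  set d : τ → ℝ := fun i => Cb i.1 a with hd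
  set u : τ → ℝ := fun i => Ct i.1 a with hu0
  -- trailing block identity
  have hLL : Lᵀ * L = Aᵀ * A + w ^ 2 • (1 : Matrix τ τ ℝ) := by
    ext i j
    have h1 : (Lᵀ * L) i j = ∑ k : τ, Ct k.1 i.1 * Ct k.1 j.1 := by
      simp [Matrix.mul_apply, Matrix.transpose_apply, hL, trailing]
      rfl
    have h2 : (Ctᵀ * Ct) (i : Fin m) (j : Fin m) = ∑ k : τ, Ct k.1 i.1 * Ct k.1 j.1 := by
      rw [Matrix.mul_apply]
      simp only [Matrix.transpose_apply]
      exact sum_tail a _ (fun k hk => by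
        rw [hCtLT k i.1 (lt_of_le_of_lt (not_lt.mp hk) i.2), zero_mul])
    have h3 : (Cbᵀ * Cb) (i : Fin m) (j : Fin m) = (Aᵀ * A) i j := by
      rw [Matrix.mul_apply]
      simp only [Matrix.transpose_apply]
      rw [sum_tail a _ (fun k hk => by
        rw [hCbLT k i.1 (lt_of_le_of_lt (not_lt.mp hk) i.2), zero_mul])]
      simp [Matrix.mul_apply, Matrix.transpose_apply, hA, trailing]
    have h4 : ((w ^ 2) • (1 : Matrix (Fin m) (Fin m) ℝ)) (i : Fin m) (j : Fin m)
        = ((w ^ 2) • (1 : Matrix τ τ ℝ)) i j := by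
      simp [Matrix.smul_apply, Matrix.one_apply, Subtype.ext_iff]
    rw [h1, ← h2]
    have := congrFun (congrFun hCt i.1) j.1
    rw [this]
    simp only [Matrix.add_apply, h3, h4]
  -- positive definiteness / invertibility
  have hPD : (Aᵀ * A + w ^ 2 • (1 : Matrix τ τ ℝ)).PosDef :=
    posDef_reg _ (Matrix.posSemidef_conjTranspose_mul_self A) w hw
  have hLdet : L.det ≠ 0 := by
    have h := hPD.det_pos
    rw [← hLL, Matrix.det_mul, Matrix.det_transpose] at h
    intro h0; rw [h0, mul_zero] at h; exact lt_irrefl _ h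
  -- the column equation
  have hcol : Lᵀ *ᵥ u = Aᵀ *ᵥ d := by
    funext i
    have h2 : (Lᵀ *ᵥ u) i = ∑ k : τ, Ct k.1 i.1 * Ct k.1 a := by
      simp [Matrix.mulVec, dotProduct, Matrix.transpose_apply, hL, trailing, hu0]
      rfl
    have h3 : (Ctᵀ * Ct) (i : Fin m) a = ∑ k : τ, Ct k.1 i.1 * Ct k.1 a := by
      rw [Matrix.mul_apply]
      simp only [Matrix.transpose_apply]
      exact sum_tail a _ (fun k hk => by
        rw [hCtLT k i.1 (lt_of_le_of_lt (not_lt.mp hk) i.2), zero_mul])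
    have h4 : (Cbᵀ * Cb) (i : Fin m) a = (Aᵀ *ᵥ d) i := by
      rw [Matrix.mul_apply]
      simp only [Matrix.transpose_apply]
      rw [sum_tail a _ (fun k hk => by
        rw [hCbLT k i.1 (lt_of_le_of_lt (not_lt.mp hk) i.2), zero_mul])]
      simp [Matrix.mulVec, dotProduct, Matrix.transpose_apply, hA, trailing, hd]
    have h5 := congrFun (congrFun hCt i.1) a
    rw [h2, ← h3, h5]
    simp only [Matrix.add_apply, h4, Matrix.smul_apply, Matrix.one_apply,
      if_neg (i.2.ne'), smul_eq_mul, mul_zero, add_zero]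
  -- diagonal equation
  have hdiag : Ct a a ^ 2 + (u ⬝ᵥ u) = Cb a a ^ 2 + (d ⬝ᵥ d) + w ^ 2 := by
    have h2 : (Ctᵀ * Ct) a a = Ct a a ^ 2 + (u ⬝ᵥ u) := by
      rw [Matrix.mul_apply]
      simp only [Matrix.transpose_apply]
      rw [sum_split_diag_tail a _ (fun k hk => by rw [hCtLT k a hk, zero_mul])]
      simp [dotProduct, pow_two, hu0]
      rfl
    have h3 : (Cbᵀ * Cb) a a = Cb a a ^ 2 + (d ⬝ᵥ d) := by
      rw [Matrix.mul_apply]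
      simp only [Matrix.transpose_apply]
      rw [sum_split_diag_tail a _ (fun k hk => by rw [hCbLT k a hk, zero_mul])]
      simp [dotProduct, pow_two, hd]
      rfl
    have h5 := congrFun (congrFun hCt a) a
    rw [← h2, h5]
    simp only [Matrix.add_apply, h3, Matrix.smul_apply, Matrix.one_apply_eq, smul_eq_mul,
      mul_one]
  -- solve for u and compute u ⬝ᵥ u
  have hLTdet : IsUnit (Lᵀ).det := by rw [Matrix.det_transpose]; exact hLdet.isUnit
  have huu : u ⬝ᵥ u = d ⬝ᵥ ((1 - w ^ 2 • (A * Aᵀ + w ^ 2 • 1)⁻¹) *ᵥ d) := by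
    have hueq : u = (Lᵀ)⁻¹ *ᵥ (Aᵀ *ᵥ d) := by
      rw [← hcol, Matrix.mulVec_mulVec, Matrix.nonsing_inv_mul _ hLTdet, Matrix.one_mulVec]
    rw [hueq, dot_self_mulVec]
    have hMM : ((Lᵀ)⁻¹)ᵀ * (Lᵀ)⁻¹ = (Aᵀ * A + w ^ 2 • 1)⁻¹ := by
      rw [Matrix.transpose_nonsing_inv (Lᵀ), Matrix.transpose_transpose,
        ← Matrix.mul_inv_rev, hLL]
    rw [hMM]
    calc (Aᵀ *ᵥ d) ⬝ᵥ ((Aᵀ * A + w ^ 2 • 1)⁻¹ *ᵥ (Aᵀ *ᵥ d))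
        = (d ᵥ* A) ⬝ᵥ ((Aᵀ * A + w ^ 2 • 1)⁻¹ *ᵥ (Aᵀ *ᵥ d)) := by
          rw [Matrix.mulVec_transpose]
      _ = d ⬝ᵥ (A *ᵥ ((Aᵀ * A + w ^ 2 • 1)⁻¹ *ᵥ (Aᵀ *ᵥ d))) :=
          (Matrix.dotProduct_mulVec d A _).symm
      _ = d ⬝ᵥ ((A * (Aᵀ * A + w ^ 2 • 1)⁻¹ * Aᵀ) *ᵥ d) := by
          rw [Matrix.mulVec_mulVec, Matrix.mulVec_mulVec]
      _ = d ⬝ᵥ ((1 - w ^ 2 • (A * Aᵀ + w ^ 2 • 1)⁻¹) *ᵥ d) := by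
          rw [push_through A w hw]
  have hsplit : d ⬝ᵥ ((1 - w ^ 2 • (A * Aᵀ + w ^ 2 • 1)⁻¹) *ᵥ d)
      = d ⬝ᵥ d - w ^ 2 * (d ⬝ᵥ ((A * Aᵀ + w ^ 2 • 1)⁻¹ *ᵥ d)) := by
    rw [Matrix.sub_mulVec, Matrix.one_mulVec, dotProduct_sub,
      Matrix.smul_mulVec, dotProduct_smul, smul_eq_mul]
  rw [hsplit] at huu
  show Ct a a ^ 2 = Cb a a ^ 2 + w ^ 2 + w ^ 2 * (d ⬝ᵥ ((A * Aᵀ + w ^ 2 • 1)⁻¹ *ᵥ d))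
  linarith [hdiag, huu]

set_option maxHeartbeats 2000000 in
/-- Bounds on the diagonalization number of `C = C̄·C̃⁻¹`, where `C̃` is
the reverse Cholesky factor of `C̄ᵀ·C̄ + w²·I_m`:
`(1/ρ²)·∑ α_a² ≤ dn(C) ≤ (1/ρ²)·∑ β_a²` with `ρ² = ∑_a σ̄_a²/(σ̄_a² + w²)`, where `σ̄_a`
are the singular values of `C̄`, and `α_a`, `β_a` defined as in the diagonal bounds. -/
theorem dn_bounds_of_preconditioning
    (m : ℕ) (hm : 1 ≤ m) (w : ℝ) (hw : 0 < w)
    (Cb Ct : Matrix (Fin m) (Fin m) ℝ)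
    (hCb0 : Cb ≠ 0)
    (hCbLT : ∀ i j : Fin m, i < j → Cb i j = 0)
    (hCbdiag : ∀ i, 0 ≤ Cb i i)
    (hCtLT : ∀ i j : Fin m, i < j → Ct i j = 0)
    (hCtdiag : ∀ i, 0 < Ct i i)
    (hCt : Ctᵀ * Ct = Cbᵀ * Cb + (w ^ 2) • (1 : Matrix (Fin m) (Fin m) ℝ)) :
    (1 / (∑ a, singVals Cb a ^ 2 / (singVals Cb a ^ 2 + w ^ 2)))
        * (∑ a, Cb a a ^ 2
            / (Cb a a ^ 2 + w ^ 2
              + w ^ 2 * tailSq Cb a / (sigmaMin (trailing Cb a) ^ 2 + w ^ 2)))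
      ≤ dn (Cb * Ct⁻¹) ∧
    dn (Cb * Ct⁻¹)
      ≤ (1 / (∑ a, singVals Cb a ^ 2 / (singVals Cb a ^ 2 + w ^ 2)))
        * (∑ a, Cb a a ^ 2
            / (Cb a a ^ 2 + w ^ 2
              + w ^ 2 * tailSq Cb a / (sigmaMax (trailing Cb a) ^ 2 + w ^ 2))) := by
  classical
  have hM : (Cbᵀ * Cb).PosSemidef := Matrix.posSemidef_conjTranspose_mul_self Cb
  set eig : Fin m → ℝ := (Matrix.isHermitian_transpose_mul_self Cb).eigenvalues with heig
  have heignn : ∀ a, 0 ≤ eig a := fun a => hM.eigenvalues_nonneg a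
  have hsing : ∀ a, singVals Cb a ^ 2 = eig a := fun a => Real.sq_sqrt (heignn a)
  set ρ : ℝ := ∑ a, singVals Cb a ^ 2 / (singVals Cb a ^ 2 + w ^ 2) with hρ
  have hρeig : ρ = ∑ a, eig a / (eig a + w ^ 2) :=
    Finset.sum_congr rfl fun a _ => by rw [hsing a]
  -- positivity of ρ
  have htr : 0 < ∑ a, eig a := by
    have h1 : (Cbᵀ * Cb).trace = ∑ a, eig a := trace_eig _ hM.1
    have h2 : (Cbᵀ * Cb).trace = ∑ j, ∑ i, Cb i j ^ 2 := by
      simp [Matrix.trace, Matrix.diag, Matrix.mul_apply, pow_two]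
    obtain ⟨i0, j0, hne⟩ : ∃ i j, Cb i j ≠ 0 := by
      by_contra hcon
      push_neg at hcon
      exact hCb0 (by ext i j; simp [hcon])
    rw [← h1, h2]
    refine Finset.sum_pos' (fun j _ => Finset.sum_nonneg fun i _ => sq_nonneg _)
      ⟨j0, Finset.mem_univ _, ?_⟩
    exact Finset.sum_pos' (fun i _ => sq_nonneg _)
      ⟨i0, Finset.mem_univ _, pow_two_pos_of_ne_zero hne⟩
  have hρpos : 0 < ρ := by
    rw [hρeig]
    obtain ⟨k, hk⟩ : ∃ k, 0 < eig k := by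
      by_contra hcon
      push_neg at hcon
      have : ∑ a, eig a ≤ 0 := Finset.sum_nonpos fun a _ => hcon a
      linarith
    refine Finset.sum_pos' (fun a _ => div_nonneg (heignn a) (add_pos_of_nonneg_of_pos (heignn a) (by positivity)).le) ⟨k,
      Finset.mem_univ _, div_pos hk (add_pos_of_nonneg_of_pos (heignn k) (by positivity))⟩
  -- Ct is invertible
  have hPDfull : (Ctᵀ * Ct).PosDef := by rw [hCt]; exact posDef_reg _ hM w hw
  have hdetCt : Ct.det ≠ 0 := by
    have h := hPDfull.det_pos
    rw [Matrix.det_mul, Matrix.det_transpose] at h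
    intro h0; rw [h0, mul_zero] at h; exact lt_irrefl _ h
  haveI : Invertible Ct := Ct.invertibleOfIsUnitDet hdetCt.isUnit
  have hCtBT : Ct.BlockTriangular (fun i => OrderDual.toDual i) := fun i j hij =>
    hCtLT i j hij
  have hinvBT := Matrix.blockTriangular_inv_of_blockTriangular hCtBT
  have hinvLT : ∀ i j : Fin m, i < j → Ct⁻¹ i j = 0 := fun i j hij => hinvBT hij
  have hinvdiag : ∀ a : Fin m, Ct⁻¹ a a = (Ct a a)⁻¹ := by
    intro a
    have h1 := congrFun (congrFun (Matrix.nonsing_inv_mul Ct hdetCt.isUnit) a) a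
    rw [Matrix.mul_apply, Finset.sum_eq_single a (fun k _ hk => ?_) (by simp)] at h1
    · rw [Matrix.one_apply_eq] at h1
      exact eq_inv_of_mul_eq_one_left h1
    · rcases lt_or_gt_of_ne hk with h | h
      · rw [hCtLT k a h, mul_zero]
      · rw [hinvLT a k h, zero_mul]
  have hCdiag : ∀ a : Fin m, (Cb * Ct⁻¹) a a = Cb a a / Ct a a := by
    intro a
    rw [Matrix.mul_apply, Finset.sum_eq_single a (fun k _ hk => ?_) (by simp)]
    · rw [hinvdiag a, div_eq_mul_inv]
    · rcases lt_or_gt_of_ne hk with h | h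
      · rw [hinvLT k a h, mul_zero]
      · rw [hCbLT a k h, zero_mul]
  -- Frobenius norm of Cb * Ct⁻¹ equals ρ
  have hfrob : ∑ i, ∑ j, ((Cb * Ct⁻¹) i j) ^ 2 = ρ := by
    have e1 : ∑ i, ∑ j, ((Cb * Ct⁻¹) i j) ^ 2 = ((Cb * Ct⁻¹)ᵀ * (Cb * Ct⁻¹)).trace := by
      rw [Finset.sum_comm]
      simp [Matrix.trace, Matrix.diag, Matrix.mul_apply, Matrix.transpose_apply, pow_two,
        mul_comm]
    have e2 : (Cb * Ct⁻¹)ᵀ * (Cb * Ct⁻¹) = Ct⁻¹ᵀ * ((Cbᵀ * Cb) * Ct⁻¹) := by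
      rw [Matrix.transpose_mul]
      simp only [Matrix.mul_assoc]
    have e3 : (Ct⁻¹ᵀ * ((Cbᵀ * Cb) * Ct⁻¹)).trace
        = ((Cbᵀ * Cb) * (Ct⁻¹ * Ct⁻¹ᵀ)).trace := by
      rw [Matrix.trace_mul_comm]
      simp only [Matrix.mul_assoc]
    have e4 : Ct⁻¹ * Ct⁻¹ᵀ = ((Cbᵀ * Cb) + w ^ 2 • 1)⁻¹ := by
      rw [Matrix.transpose_nonsing_inv, ← Matrix.mul_inv_rev, hCt]
    rw [e1, e2, e3, e4, hρeig]
    exact trace_reg_inv _ hM w hw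
  -- per-index bounds
  have key : ∀ a : Fin m,
      Cb a a ^ 2 / (Cb a a ^ 2 + w ^ 2
          + w ^ 2 * tailSq Cb a / (sigmaMin (trailing Cb a) ^ 2 + w ^ 2))
        ≤ (Cb * Ct⁻¹) a a ^ 2
      ∧ (Cb * Ct⁻¹) a a ^ 2
        ≤ Cb a a ^ 2 / (Cb a a ^ 2 + w ^ 2
          + w ^ 2 * tailSq Cb a / (sigmaMax (trailing Cb a) ^ 2 + w ^ 2)) := by
    intro a
    have hq := diag_formula m w hw Cb Ct hCbLT hCtLT hCt a
    set A := trailing Cb a with hA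
    set d : {i : Fin m // a < i} → ℝ := fun i => Cb i.1 a with hd
    set q : ℝ := d ⬝ᵥ ((A * Aᵀ + w ^ 2 • 1)⁻¹ *ᵥ d) with hqdef
    have htail : tailSq Cb a = ∑ i, d i ^ 2 := sum_tail_ite a _
    have hS : (A * Aᵀ).PosSemidef := Matrix.posSemidef_self_mul_conjTranspose A
    have hlo : ∀ j, sigmaMin A ^ 2 ≤ hS.1.eigenvalues j := by
      intro j
      obtain ⟨k, hk⟩ := eigenvalue_transfer A j
      change _ = (Matrix.isHermitian_mul_conjTranspose_self A).eigenvalues j at hk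
      rw [show hS.1.eigenvalues j = (Matrix.isHermitian_mul_conjTranspose_self A).eigenvalues j
        from rfl]
      rw [← hk, ← Real.sq_sqrt (show 0 ≤ (Matrix.isHermitian_transpose_mul_self A).eigenvalues k
        from Matrix.eigenvalues_conjTranspose_mul_self_nonneg A k)]
      exact pow_le_pow_left₀ (Real.iInf_nonneg fun i => Real.sqrt_nonneg _)
        (ciInf_le (Finite.bddBelow_range _) k) 2
    have hhi : ∀ j, hS.1.eigenvalues j ≤ sigmaMax A ^ 2 := by
      intro j
      obtain ⟨k, hk⟩ := eigenvalue_transfer A j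
      change _ = (Matrix.isHermitian_mul_conjTranspose_self A).eigenvalues j at hk
      rw [show hS.1.eigenvalues j = (Matrix.isHermitian_mul_conjTranspose_self A).eigenvalues j
        from rfl]
      rw [← hk, ← Real.sq_sqrt (show 0 ≤ (Matrix.isHermitian_transpose_mul_self A).eigenvalues k
        from Matrix.eigenvalues_conjTranspose_mul_self_nonneg A k)]
      have h2 : singVals A k ≤ sigmaMax A := le_ciSup (Finite.bddAbove_range (singVals A)) k
      exact pow_le_pow_left₀ (Real.sqrt_nonneg _) h2 2
    have hb := quadform_reg_inv (A * Aᵀ) hS w hw d (sigmaMin A ^ 2) (sigmaMax A ^ 2)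
      (sq_nonneg _) hlo hhi
    have hqlo : tailSq Cb a / (sigmaMax A ^ 2 + w ^ 2) ≤ q := by rw [htail]; exact hb.1
    have hqhi : q ≤ tailSq Cb a / (sigmaMin A ^ 2 + w ^ 2) := by rw [htail]; exact hb.2
    have htails : 0 ≤ tailSq Cb a := by rw [htail]; positivity
    have hsmaxpos : 0 < sigmaMax A ^ 2 + w ^ 2 := by
      have : (0:ℝ) ≤ sigmaMax A ^ 2 := sq_nonneg _
      positivity
    have hsminpos : 0 < sigmaMin A ^ 2 + w ^ 2 := by
      have : (0:ℝ) ≤ sigmaMin A ^ 2 := sq_nonneg _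
      positivity
    have hq0 : 0 ≤ q := le_trans (div_nonneg htails hsmaxpos.le) hqlo
    have hden0 : 0 < Cb a a ^ 2 + w ^ 2 + w ^ 2 * q := by
      have h1 : 0 ≤ w ^ 2 * q := mul_nonneg (sq_nonneg w) hq0
      have h2 : 0 < Cb a a ^ 2 + w ^ 2 := by positivity
      linarith
    have hCt2 : (Cb * Ct⁻¹) a a ^ 2 = Cb a a ^ 2 / (Cb a a ^ 2 + w ^ 2 + w ^ 2 * q) := by
      rw [hCdiag a, div_pow, hq]
    constructor
    · rw [hCt2]
      refine div_le_div_of_nonneg_left (sq_nonneg _) hden0 ?_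
      rw [mul_div_assoc]
      have := mul_le_mul_of_nonneg_left hqhi (sq_nonneg w)
      linarith
    · rw [hCt2]
      have hden1 : 0 < Cb a a ^ 2 + w ^ 2
          + w ^ 2 * tailSq Cb a / (sigmaMax A ^ 2 + w ^ 2) := by
        have h1 : 0 ≤ w ^ 2 * tailSq Cb a / (sigmaMax A ^ 2 + w ^ 2) := by positivity
        have h2 : 0 < Cb a a ^ 2 + w ^ 2 := by positivity
        linarith
      refine div_le_div_of_nonneg_left (sq_nonneg _) hden1 ?_
      rw [mul_div_assoc]
      have := mul_le_mul_of_nonneg_left hqlo (sq_nonneg w)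
      linarith
  -- assemble
  have hdn : dn (Cb * Ct⁻¹) = (∑ a, (Cb * Ct⁻¹) a a ^ 2) / ρ := by
    unfold dn
    rw [hfrob]
  constructor
  · have hsum := Finset.sum_le_sum fun a (_ : a ∈ Finset.univ) => (key a).1
    rw [hdn, one_div, inv_mul_eq_div]
    exact (div_le_div_iff_of_pos_right hρpos).mpr hsum
  · have hsum := Finset.sum_le_sum fun a (_ : a ∈ Finset.univ) => (key a).2
    rw [hdn, one_div, inv_mul_eq_div]
    exact (div_le_div_iff_of_pos_right hρpos).mpr hsum
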